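/- For all integers k ≥ 0 and 0 ≤ m ≤ k and all complex parameters z₁, z₂ ∈ ℂ, the complex combinations of directional derivatives of F_k^m satisfy, identically on ℝ⁴: ∇_{e₂} F_k^m - i·∇_{e₃} F_k^m = 2m·F_k^{m-1} and ∇_{e₂} F_k^m + i·∇_{e₃} F_k^m = -2(k-m)·F_k^{m+1}, with the convention that F_k^{-1} = 0 and F_k^{k+1} = 0. -/

import Mathlib

/-- The polynomial `F_k^m(x,y,z,w) = (αz₁+βz₂)^m (-conj(β)z₁+conj(α)z₂)^{k-m}` where
`α = x+iy`, `β = z+iw`, with the convention that `F_k^m = 0` unless `0 ≤ m ≤ k`. -/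
noncomputable def Fkm (k : ℕ) (m : ℤ) (z₁ z₂ : ℂ) (p : Fin 4 → ℝ) : ℂ :=
  if 0 ≤ m ∧ m ≤ (k : ℤ) then
    (((p 0 : ℂ) + (p 1 : ℂ) * Complex.I) * z₁ +
        ((p 2 : ℂ) + (p 3 : ℂ) * Complex.I) * z₂) ^ m.toNat *
      ((-(starRingEnd ℂ) ((p 2 : ℂ) + (p 3 : ℂ) * Complex.I)) * z₁ +
        (starRingEnd ℂ) ((p 0 : ℂ) + (p 1 : ℂ) * Complex.I) * z₂) ^ (k - m.toNat)
  else 0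

/-- The vector field `e₂(x,y,z,w) = (-z, w, x, -y)` on `ℝ⁴`. -/
def fieldE2 (p : Fin 4 → ℝ) : Fin 4 → ℝ := ![-p 2, p 3, p 0, -p 1]

/-- The vector field `e₃(x,y,z,w) = (-w, -z, y, x)` on `ℝ⁴`. -/
def fieldE3 (p : Fin 4 → ℝ) : Fin 4 → ℝ := ![-p 3, -p 2, p 1, p 0]

/-!
Write `A p = αz₁ + βz₂` and `B p = -conj(β)z₁ + conj(α)z₂`; both are `ℝ`-linear in `p`,
and `F_k^m = A^m B^(k-m)`. Along the two vector fields they rotate into each other: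
`A(e₂) = B`, `B(e₂) = -A`, `A(e₃) = iB`, `B(e₃) = iA`. Hence, by the Leibniz rule,
`∇_{e₂} ∓ i∇_{e₃}` acts as the derivation sending `(A, B)` to `(2B, 0)`, respectively to
`(0, -2A)`.
-/

open Complex

section PowMulPow

variable {𝕜 E 𝔸 : Type*} [NontriviallyNormedField 𝕜] [NormedAddCommGroup E]
  [NormedSpace 𝕜 E] [NormedCommRing 𝔸] [NormedAlgebra 𝕜 𝔸]

theorem fderiv_pow_mul_pow_apply (A B : E →L[𝕜] 𝔸) (m n : ℕ) (p v : E) :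
    fderiv 𝕜 (fun q => A q ^ m * B q ^ n) p v =
      m * A p ^ (m - 1) * B p ^ n * A v + n * A p ^ m * B p ^ (n - 1) * B v := by
  have h : HasFDerivAt (fun q => A q ^ m * B q ^ n) _ p :=
    (A.hasFDerivAt.pow m).mul (B.hasFDerivAt.pow n)
  simp only [h.fderiv, add_apply, smul_apply, smul_eq_mul, nsmul_eq_mul]
  ring

end PowMulPow

namespace Fkm

noncomputable def factorA (z₁ z₂ : ℂ) : (Fin 4 → ℝ) →L[ℝ] ℂ :=
  z₁ • (ofRealCLM.comp (.proj 0) + I • ofRealCLM.comp (.proj 1)) +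
    z₂ • (ofRealCLM.comp (.proj 2) + I • ofRealCLM.comp (.proj 3))

noncomputable def factorB (z₁ z₂ : ℂ) : (Fin 4 → ℝ) →L[ℝ] ℂ :=
  z₂ • (ofRealCLM.comp (.proj 0) - I • ofRealCLM.comp (.proj 1)) -
    z₁ • (ofRealCLM.comp (.proj 2) - I • ofRealCLM.comp (.proj 3))

variable (z₁ z₂ : ℂ) (p : Fin 4 → ℝ)

theorem factorA_apply :
    factorA z₁ z₂ p = (p 0 + p 1 * I) * z₁ + (p 2 + p 3 * I) * z₂ := by
  simp only [factorA, add_apply, smul_apply, ContinuousLinearMap.comp_apply,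
    ContinuousLinearMap.proj_apply, ofRealCLM_apply, smul_eq_mul]
  ring

theorem factorB_apply :
    factorB z₁ z₂ p =
      -starRingEnd ℂ (p 2 + p 3 * I) * z₁ + starRingEnd ℂ (p 0 + p 1 * I) * z₂ := by
  simp only [factorB, sub_apply, smul_apply, ContinuousLinearMap.comp_apply,
    ContinuousLinearMap.proj_apply, ofRealCLM_apply, smul_eq_mul, map_add, map_mul,
    conj_ofReal, conj_I]
  ring

theorem factorA_fieldE2 : factorA z₁ z₂ (fieldE2 p) = factorB z₁ z₂ p := by
  simp only [factorA_apply, factorB_apply, fieldE2, Matrix.cons_val_zero,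
    Matrix.cons_val_one, Matrix.cons_val, ofReal_neg, map_add, map_mul, conj_ofReal, conj_I]
  ring

theorem factorB_fieldE2 : factorB z₁ z₂ (fieldE2 p) = -factorA z₁ z₂ p := by
  simp only [factorA_apply, factorB_apply, fieldE2, Matrix.cons_val_zero,
    Matrix.cons_val_one, Matrix.cons_val, ofReal_neg, map_add, map_mul, map_neg,
    conj_ofReal, conj_I]
  ring

theorem factorA_fieldE3 : factorA z₁ z₂ (fieldE3 p) = I * factorB z₁ z₂ p := by
  simp only [factorA_apply, factorB_apply, fieldE3, Matrix.cons_val_zero,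
    Matrix.cons_val_one, Matrix.cons_val, ofReal_neg, map_add, map_mul, conj_ofReal, conj_I]
  ring_nf
  simp only [I_sq]
  ring

theorem factorB_fieldE3 : factorB z₁ z₂ (fieldE3 p) = I * factorA z₁ z₂ p := by
  simp only [factorA_apply, factorB_apply, fieldE3, Matrix.cons_val_zero,
    Matrix.cons_val_one, Matrix.cons_val, ofReal_neg, map_add, map_mul, map_neg,
    conj_ofReal, conj_I]
  ring_nf
  simp only [I_sq]
  ring

theorem eq_factorA_pow_mul_factorB_pow (m n : ℕ) :
    Fkm (m + n) m z₁ z₂ = fun q => factorA z₁ z₂ q ^ m * factorB z₁ z₂ q ^ n := by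
  funext q
  rw [Fkm, if_pos (by omega), factorA_apply, factorB_apply, Int.toNat_natCast,
    Nat.add_sub_cancel_left]

theorem lowering (m n : ℕ) :
    fderiv ℝ (Fkm (m + n) m z₁ z₂) p (fieldE2 p)
        - I * fderiv ℝ (Fkm (m + n) m z₁ z₂) p (fieldE3 p)
      = 2 * m * factorA z₁ z₂ p ^ (m - 1) * factorB z₁ z₂ p ^ (n + 1) := by
  simp only [eq_factorA_pow_mul_factorB_pow, fderiv_pow_mul_pow_apply, factorA_fieldE2,
    factorB_fieldE2, factorA_fieldE3, factorB_fieldE3]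
  ring_nf
  simp only [I_sq]
  ring

theorem raising (m n : ℕ) :
    fderiv ℝ (Fkm (m + n) m z₁ z₂) p (fieldE2 p)
        + I * fderiv ℝ (Fkm (m + n) m z₁ z₂) p (fieldE3 p)
      = -2 * n * factorA z₁ z₂ p ^ (m + 1) * factorB z₁ z₂ p ^ (n - 1) := by
  simp only [eq_factorA_pow_mul_factorB_pow, fderiv_pow_mul_pow_apply, factorA_fieldE2,
    factorB_fieldE2, factorA_fieldE3, factorB_fieldE3]
  ring_nf
  simp only [I_sq]
  ring

end Fkm

/-- the complex combinations of directional derivatives satisfy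
`∇_{e₂} F_k^m - i∇_{e₃} F_k^m = 2m·F_k^{m-1}` and
`∇_{e₂} F_k^m + i∇_{e₃} F_k^m = -2(k-m)·F_k^{m+1}`
(with the convention `F_k^{-1} = F_k^{k+1} = 0`, built into `Fkm`). -/
theorem stmt_11 (k : ℕ) (m : ℤ) (hm0 : 0 ≤ m) (hmk : m ≤ (k : ℤ)) (z₁ z₂ : ℂ)
    (p : Fin 4 → ℝ) :
    fderiv ℝ (Fkm k m z₁ z₂) p (fieldE2 p)
        - Complex.I * fderiv ℝ (Fkm k m z₁ z₂) p (fieldE3 p)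
        = 2 * (m : ℂ) * Fkm k (m - 1) z₁ z₂ p ∧
    fderiv ℝ (Fkm k m z₁ z₂) p (fieldE2 p)
        + Complex.I * fderiv ℝ (Fkm k m z₁ z₂) p (fieldE3 p)
        = -2 * ((k : ℂ) - (m : ℂ)) * Fkm k (m + 1) z₁ z₂ p := by
  lift m to ℕ using hm0
  obtain ⟨n, rfl⟩ := Nat.exists_eq_add_of_le (Int.ofNat_le.mp hmk)
  rw [Fkm.lowering, Fkm.raising]
  constructor
  · cases m with
    | zero => simp
    | succ m =>
      rw [show ((m + 1 : ℕ) : ℤ) - 1 = m by push_cast; ring,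
        show m + 1 + n = m + (n + 1) by ring, Fkm.eq_factorA_pow_mul_factorB_pow]
      push_cast
      ring
  · cases n with
    | zero => simp
    | succ n =>
      rw [show (m : ℤ) + 1 = (m + 1 : ℕ) by push_cast; ring,
        show m + (n + 1) = m + 1 + n by ring, Fkm.eq_factorA_pow_mul_factorB_pow]
      push_cast
      ring
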